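/- arXiv:1204.6723 — 5 statements merged into one kernel-verified Lean document; each statement's English description precedes it below -/
import Mathlib

section
/- Let K be a free augmented directed complex such that ∂⁺a is a single basis element whenever a is a positive-dimensional basis element. Then K is unital if and only if εa = 1 for every zero-dimensional basis element a. -/
open Finsupp

/-- A free augmented directed complex, encoded by its distinguished graded basis:
`B` is the set of basis elements, `dim` the dimension function, `bd a` the boundary
chain of a basis element `a`, and `eps` the augmentation (supported in dimension 0). -/
structure FADC where
  B : Type
  dim : B → ℕ
  bd : B → (B →₀ ℤ)
  eps : B → ℤ
  bd_dim : ∀ a b, b ∈ (bd a).support → dim b + 1 = dim a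
  eps_dim : ∀ b, 0 < dim b → eps b = 0
  bd_bd : ∀ a : B, ((bd a).sum fun b n => n • bd b) = 0
  eps_bd : ∀ a : B, ((bd a).sum fun b n => n * eps b) = 0

namespace FADC

variable (K : FADC)

/-- The boundary homomorphism `∂`, extended to chains. -/
noncomputable def bdc (c : K.B →₀ ℤ) : K.B →₀ ℤ := c.sum fun b n => n • K.bd b

/-- The augmentation `ε`, extended to chains. -/
noncomputable def epsc (c : K.B →₀ ℤ) : ℤ := c.sum fun b n => n * K.eps b

/-- `∂⁺c`, the positive part of `∂c`. -/
noncomputable def bdp (c : K.B →₀ ℤ) : K.B →₀ ℤ := (K.bdc c).mapRange (fun n => max n 0) (by simp)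

/-- `∂⁻c`, the negative part of `∂c`. -/
noncomputable def bdm (c : K.B →₀ ℤ) : K.B →₀ ℤ := (-K.bdc c).mapRange (fun n => max n 0) (by simp)

/-- `K` is unital if `ε((∂⁻)^q a) = ε((∂⁺)^q a) = 1` for every `q`-dimensional
basis element `a`. -/
def Unital : Prop := ∀ a : K.B,
  K.epsc (K.bdm^[K.dim a] (Finsupp.single a 1)) = 1 ∧
  K.epsc (K.bdp^[K.dim a] (Finsupp.single a 1)) = 1

/-- `K` is loop-free if its basis elements admit a (strict) partial order such that
for every basis element `a` and every `r > 0`, the basis elements occurring in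
`(∂⁻)^r a` strictly precede those occurring in `(∂⁺)^r a`. -/
def LoopFree : Prop :=
  ∃ lt : K.B → K.B → Prop, IsStrictOrder K.B lt ∧
    ∀ (a : K.B) (r : ℕ), 0 < r →
      ∀ b ∈ (K.bdm^[r] (Finsupp.single a 1)).support,
        ∀ b' ∈ (K.bdp^[r] (Finsupp.single a 1)).support, lt b b'

/-- `K` is atomic of dimension `n`. -/
def Atomic (n : ℕ) : Prop :=
  (∀ b : K.B, K.dim b ≤ n) ∧
  (∃! g : K.B, K.dim g = n) ∧
  (∀ b : K.B, K.dim b < n → ∃ a : K.B, K.dim b < K.dim a ∧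
    (b ∈ (K.bdm (Finsupp.single a 1)).support ∨ b ∈ (K.bdp (Finsupp.single a 1)).support))

/-- `g_q^α(x)`: given `x_q^- = xq` and `x_{q+1}^α = c`, this is
`x_q^- + ∂⁺a_1 + … + ∂⁺a_k` where `a_1, …, a_k` are the terms of `c`. -/
noncomputable def gch (xq c : K.B →₀ ℤ) : K.B →₀ ℤ :=
  xq + c.sum fun b n => n • K.bdp (Finsupp.single b 1)

/-- The negative chains `⟨K⟩_q^- = (∂⁻)^{n-q} g` of the canonical atom. -/
noncomputable def atomNeg (g : K.B) (n q : ℕ) : K.B →₀ ℤ :=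
  if q ≤ n then K.bdm^[n - q] (Finsupp.single g 1) else 0

/-- The positive chains `⟨K⟩_q^+ = (∂⁺)^{n-q} g` of the canonical atom. -/
noncomputable def atomPos (g : K.B) (n q : ℕ) : K.B →₀ ℤ :=
  if q ≤ n then K.bdp^[n - q] (Finsupp.single g 1) else 0

end FADC

/-- Membership in `νK`: the double sequence `(x_0^-, x_0^+ | x_1^-, x_1^+ | …)`,
given by `xm` and `xp`, is a member of `νK`. -/
structure NuMem (K : FADC) (xm xp : ℕ → (K.B →₀ ℤ)) : Prop where
  dim_m : ∀ q, ∀ b ∈ (xm q).support, K.dim b = q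
  dim_p : ∀ q, ∀ b ∈ (xp q).support, K.dim b = q
  nonneg_m : ∀ q b, 0 ≤ xm q b
  nonneg_p : ∀ q b, 0 ≤ xp q b
  fin : ∃ n, ∀ q, n < q → xm q = 0 ∧ xp q = 0
  eps_m : K.epsc (xm 0) = 1
  eps_p : K.epsc (xp 0) = 1
  bd_m : ∀ q, K.bdc (xm (q + 1)) = xp q - xm q
  bd_p : ∀ q, K.bdc (xp (q + 1)) = xp q - xm q

/-- `K` together with the class `thin` of thin basis elements is an
`n`-dimensional opetopic directed complex. -/
structure IsODC (K : FADC) (thin : K.B → Prop) (n : ℕ) : Prop where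
  atomic : K.Atomic n
  loopFree : K.LoopFree
  unital : K.Unital
  thin_pos : ∀ b, thin b → 0 < K.dim b
  bdp_basis : ∀ b : K.B, 0 < K.dim b →
    ∃ a : K.B, ¬ thin a ∧ K.bdp (Finsupp.single b 1) = Finsupp.single a 1
  bdm_thin : ∀ b : K.B, thin b →
    ∃ a : K.B, ¬ thin a ∧ K.bdm (Finsupp.single b 1) = Finsupp.single a 1

/-- An opetopic directed complex is reduced if every thin basis element is `∂⁻a`
for some other basis element `a`. -/
def ODCReduced (K : FADC) (thin : K.B → Prop) : Prop :=
  ∀ b, thin b → ∃ a, a ≠ b ∧ K.bdm (Finsupp.single a 1) = Finsupp.single b 1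

/-- A network: finite sets of edges and vertices with partially defined source and
target functions; input edges are those with no source, output edges those with no
target. -/
structure Network where
  E : Type
  V : Type
  finE : Finite E
  finV : Finite V
  src : E → Option V
  tgt : E → Option V

namespace Network

variable (N : Network)

/-- One step of a path: the target of `e` is the source of `e'`. -/
def step (e e' : N.E) : Prop := ∃ v : N.V, N.tgt e = some v ∧ N.src e' = some v

/-- There is a path from `e` to `e'`. -/
def PathTo (e e' : N.E) : Prop := Relation.ReflTransGen N.step e e'

/-- A network is acyclic if there is no nontrivial path from an edge to itself. -/
def Acyclic : Prop := ∀ e : N.E, ¬ Relation.TransGen N.step e e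

/-- A network is linear if it is acyclic and consists of a single path
`e_0, v_1, e_1, …, v_k, e_k`. -/
def Linear : Prop := N.Acyclic ∧
  ∃ (k : ℕ) (e : Fin (k + 1) ≃ N.E) (v : Fin k ≃ N.V),
    N.src (e 0) = none ∧ N.tgt (e (Fin.last k)) = none ∧
    ∀ i : Fin k, N.tgt (e i.castSucc) = some (v i) ∧ N.src (e i.succ) = some (v i)

/-- A network is confluent if it is acyclic, has a unique output edge, and every
vertex is the source of exactly one edge and the target of at least one edge. -/
def Confluent : Prop := N.Acyclic ∧ (∃! e : N.E, N.tgt e = none) ∧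
  (∀ v : N.V, ∃! e : N.E, N.src e = some v) ∧ (∀ v : N.V, ∃ e : N.E, N.tgt e = some v)

end Network

/-- An opetopic network: an acyclic network with a unique output edge, together with
thin edges (which are inputs) and thin vertices (each the target of exactly one edge,
which is not thin). -/
structure OpetopicNetwork extends Network where
  thinE : E → Prop
  thinV : V → Prop
  acyclic : toNetwork.Acyclic
  out_unique : ∃! e : E, tgt e = none
  thinE_input : ∀ e, thinE e → src e = none
  thinV_unique : ∀ v, thinV v → ∃! e, tgt e = some v
  thinV_nonthin : ∀ v e, thinV v → tgt e = some v → ¬ thinE e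

/-- An opetopic network is reduced if every thin edge has a target vertex which is
the target of no other edge. -/
def OpetopicNetwork.Reduced (N : OpetopicNetwork) : Prop :=
  ∀ e, N.thinE e → ∃ v, N.tgt e = some v ∧ ∀ e', N.tgt e' = some v → e' = e

/-- `c` is a constellation from `N` to `P`: a bijection from the vertices of `N` to
the input edges of `P`, preserving thinness, such that for every edge `e` of `P`
there is exactly one edge of `N` with a source but not a target in the preimage of
`I_e` (the input edges of `P` from which there is a path to `e`). -/
def IsConstellation (N P : OpetopicNetwork) (c : N.V → P.E) : Prop :=
  (∀ v, P.src (c v) = none) ∧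
  Function.Injective c ∧
  (∀ e : P.E, P.src e = none → ∃ v, c v = e) ∧
  (∀ v, N.thinV v ↔ P.thinE (c v)) ∧
  (∀ e : P.E, ∃! e' : N.E,
    (∃ v, N.src e' = some v ∧ P.toNetwork.PathTo (c v) e) ∧
    ¬ (∃ v, N.tgt e' = some v ∧ P.toNetwork.PathTo (c v) e))

/-- An `n`-dimensional opetopic sequence `N_0 → N_1 → … → N_n`. -/
structure OpetopicSequence (n : ℕ) where
  N : Fin (n + 1) → OpetopicNetwork
  c : ∀ q : Fin n, (N q.castSucc).V → (N q.succ).E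
  constell : ∀ q : Fin n, IsConstellation (N q.castSucc) (N q.succ) (c q)
  linear0 : (N 0).toNetwork.Linear
  noThin0 : ∀ e, ¬ (N 0).thinE e
  top_single : ∃! _e : (N (Fin.last n)).E, True
  top_noV : IsEmpty (N (Fin.last n)).V

/-- An isomorphism of opetopic sequences: families of bijections on edges and
vertices preserving sources, targets, thin edges and thin vertices, and commuting
with the constellations. -/
def SeqIso (n : ℕ) (S S' : OpetopicSequence n) : Prop :=
  ∃ (fE : ∀ q : Fin (n + 1), (S.N q).E ≃ (S'.N q).E)
    (fV : ∀ q : Fin (n + 1), (S.N q).V ≃ (S'.N q).V),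
    (∀ q : Fin (n + 1),
      (∀ e v, (S.N q).src e = some v ↔ (S'.N q).src (fE q e) = some (fV q v)) ∧
      (∀ e v, (S.N q).tgt e = some v ↔ (S'.N q).tgt (fE q e) = some (fV q v)) ∧
      (∀ e, (S.N q).thinE e ↔ (S'.N q).thinE (fE q e)) ∧
      (∀ v, (S.N q).thinV v ↔ (S'.N q).thinV (fV q v))) ∧
    (∀ q : Fin n, ∀ v, fE q.succ (S.c q v) = S'.c q (fV q.castSucc v))

/-- The opetopic sequence `S` realizes the sequence
`G_0^-(⟨K⟩) → … → G_n^-(⟨K⟩)` associated to the opetopic directed complex `K`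
(with top basis element `g` and thin elements `thin`): the edges of `S.N q`
correspond bijectively to the terms of `g_q^-(⟨K⟩)`, the vertices to the terms of
`⟨K⟩_{q+1}^-`, sources, targets and thinness are as prescribed by `∂⁺`, `∂⁻` and
`thin`, and the constellations are the identity correspondences. -/
def RealizedBy (K : FADC) (thin : K.B → Prop) (n : ℕ) (g : K.B)
    (S : OpetopicSequence n) : Prop :=
  ∃ (eE : ∀ q : Fin (n + 1), (S.N q).E → K.B)
    (eV : ∀ q : Fin (n + 1), (S.N q).V → K.B),
    (∀ q : Fin (n + 1),
      Function.Injective (eE q) ∧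
      (∀ ed, eE q ed ∈ (K.gch (K.atomNeg g n q.1) (K.atomNeg g n (q.1 + 1))).support) ∧
      (∀ b ∈ (K.gch (K.atomNeg g n q.1) (K.atomNeg g n (q.1 + 1))).support,
        ∃ ed, eE q ed = b) ∧
      Function.Injective (eV q) ∧
      (∀ v, eV q v ∈ (K.atomNeg g n (q.1 + 1)).support) ∧
      (∀ b ∈ (K.atomNeg g n (q.1 + 1)).support, ∃ v, eV q v = b) ∧
      (∀ ed v, (S.N q).src ed = some v ↔
        eE q ed ∈ (K.bdp (Finsupp.single (eV q v) 1)).support) ∧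
      (∀ ed v, (S.N q).tgt ed = some v ↔
        eE q ed ∈ (K.bdm (Finsupp.single (eV q v) 1)).support) ∧
      (∀ ed, (S.N q).thinE ed ↔ thin (eE q ed)) ∧
      (∀ v, (S.N q).thinV v ↔ thin (eV q v))) ∧
    (∀ q : Fin n, ∀ v, eE q.succ (S.c q v) = eV q.castSucc v)

/-- A bundled `n`-dimensional opetopic directed complex. -/
structure ODCBundle (n : ℕ) where
  K : FADC
  thin : K.B → Prop
  g : K.B
  dim_g : K.dim g = n
  isODC : IsODC K thin n

/-- Isomorphism of (bundled) opetopic directed complexes: a dimension- and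
thinness-preserving bijection of bases commuting with boundaries and augmentations. -/
def ODCIso {n : ℕ} (A A' : ODCBundle n) : Prop :=
  ∃ φ : A.K.B ≃ A'.K.B,
    (∀ b, A'.K.dim (φ b) = A.K.dim b) ∧
    (∀ b, A'.thin (φ b) ↔ A.thin b) ∧
    (∀ b, A'.K.bd (φ b) = Finsupp.equivMapDomain φ (A.K.bd b)) ∧
    (∀ b, A'.K.eps (φ b) = A.K.eps b)

section Aux

variable (K : FADC)

lemma bdc_eq_lc (c : K.B →₀ ℤ) :
    K.bdc c = Finsupp.linearCombination ℤ K.bd c := by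
  rw [Finsupp.linearCombination_apply]; rfl

lemma epsc_eq_lc (c : K.B →₀ ℤ) :
    K.epsc c = Finsupp.linearCombination ℤ K.eps c := by
  rw [Finsupp.linearCombination_apply]
  simp only [FADC.epsc, smul_eq_mul]

lemma epsc_bdc (c : K.B →₀ ℤ) : K.epsc (K.bdc c) = 0 := by
  rw [bdc_eq_lc, epsc_eq_lc, Finsupp.apply_linearCombination]
  have : (Finsupp.linearCombination ℤ K.eps) ∘ K.bd = fun _ => (0 : ℤ) := by
    funext b
    have := K.eps_bd b
    rw [Function.comp_apply, Finsupp.linearCombination_apply]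
    simpa [smul_eq_mul] using this
  rw [this]
  exact Finsupp.linearCombination_zero_apply ℤ c

lemma bdc_bdc (c : K.B →₀ ℤ) : K.bdc (K.bdc c) = 0 := by
  rw [bdc_eq_lc, bdc_eq_lc, Finsupp.apply_linearCombination]
  have : (Finsupp.linearCombination ℤ K.bd) ∘ K.bd = fun _ => (0 : K.B →₀ ℤ) := by
    funext b
    have := K.bd_bd b
    rw [Function.comp_apply, Finsupp.linearCombination_apply]
    simpa using this
  rw [this]
  exact Finsupp.linearCombination_zero_apply ℤ c

lemma bdp_sub_bdm (c : K.B →₀ ℤ) : K.bdp c - K.bdm c = K.bdc c := by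
  ext b
  simp only [Finsupp.coe_sub, Pi.sub_apply, FADC.bdp, FADC.bdm,
    Finsupp.mapRange_apply, Finsupp.coe_neg, Pi.neg_apply]
  omega

lemma bdp_eq_add (c : K.B →₀ ℤ) : K.bdp c = K.bdm c + K.bdc c := by
  rw [← bdp_sub_bdm]; abel

lemma epsc_add (x y : K.B →₀ ℤ) : K.epsc (x + y) = K.epsc x + K.epsc y := by
  rw [epsc_eq_lc, epsc_eq_lc, epsc_eq_lc, map_add]

lemma bdc_add (x y : K.B →₀ ℤ) : K.bdc (x + y) = K.bdc x + K.bdc y := by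
  rw [bdc_eq_lc, bdc_eq_lc, bdc_eq_lc, map_add]

lemma epsc_bdp_eq_bdm (c : K.B →₀ ℤ) : K.epsc (K.bdp c) = K.epsc (K.bdm c) := by
  rw [bdp_eq_add, epsc_add, epsc_bdc, add_zero]

lemma bdc_bdp_eq_bdm (c : K.B →₀ ℤ) : K.bdc (K.bdp c) = K.bdc (K.bdm c) := by
  rw [bdp_eq_add, bdc_add, bdc_bdc, add_zero]

lemma bdp_congr {c d : K.B →₀ ℤ} (h : K.bdc c = K.bdc d) : K.bdp c = K.bdp d := by
  unfold FADC.bdp; rw [h]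

lemma epsc_bdp_iter_congr (r : ℕ) {c d : K.B →₀ ℤ}
    (h : K.bdc c = K.bdc d) (h' : K.epsc c = K.epsc d) :
    K.epsc (K.bdp^[r] c) = K.epsc (K.bdp^[r] d) := by
  cases r with
  | zero => simpa using h'
  | succ s =>
    rw [Function.iterate_succ_apply, Function.iterate_succ_apply,
      bdp_congr K h]

lemma epsc_bdm_iter_eq_bdp_iter (r : ℕ) (c : K.B →₀ ℤ) :
    K.epsc (K.bdm^[r] c) = K.epsc (K.bdp^[r] c) := by
  induction r generalizing c with
  | zero => rfl
  | succ s ih =>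
    rw [Function.iterate_succ_apply, Function.iterate_succ_apply]
    calc K.epsc (K.bdm^[s] (K.bdm c)) = K.epsc (K.bdp^[s] (K.bdm c)) := ih _
      _ = K.epsc (K.bdp^[s] (K.bdp c)) :=
        epsc_bdp_iter_congr K s (bdc_bdp_eq_bdm K c).symm
          (epsc_bdp_eq_bdm K c).symm

lemma bdc_single (a : K.B) : K.bdc (Finsupp.single a 1) = K.bd a := by
  unfold FADC.bdc
  rw [Finsupp.sum_single_index] <;> simp

lemma epsc_single (a : K.B) : K.epsc (Finsupp.single a 1) = K.eps a := by
  unfold FADC.epsc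
  rw [Finsupp.sum_single_index] <;> simp

lemma bdp_iter_single
    (hb : ∀ a : K.B, 0 < K.dim a →
      ∃ b : K.B, K.bdp (Finsupp.single a 1) = Finsupp.single b 1) :
    ∀ (q : ℕ) (a : K.B), K.dim a = q →
      ∃ b : K.B, K.dim b = 0 ∧
        K.bdp^[q] (Finsupp.single a 1) = Finsupp.single b 1 := by
  intro q
  induction q with
  | zero => exact fun a ha => ⟨a, ha, rfl⟩
  | succ s ih =>
    intro a ha
    obtain ⟨b, hbp⟩ := hb a (by omega)
    have hb1 : K.bdp (Finsupp.single a 1) b = 1 := by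
      rw [hbp]; simp
    have hbd : (K.bd a) b ≠ 0 := by
      have : K.bdp (Finsupp.single a 1) b = max (K.bd a b) 0 := by
        unfold FADC.bdp
        rw [Finsupp.mapRange_apply, bdc_single]
      rw [this] at hb1
      omega
    have hdimb : K.dim b = s := by
      have := K.bd_dim a b (Finsupp.mem_support_iff.mpr hbd)
      omega
    obtain ⟨b0, hb00, hit⟩ := ih b hdimb
    exact ⟨b0, hb00, by
      rw [Function.iterate_succ_apply, hbp, hit]⟩

end Aux

/-- Proposition 2.8(1): if `∂⁺a` is a single basis element for every
positive-dimensional basis element `a`, then `K` is unital iff `εa = 1` for every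
zero-dimensional basis element `a`. -/
theorem stmt0 (K : FADC)
    (hb : ∀ a : K.B, 0 < K.dim a →
      ∃ b : K.B, K.bdp (Finsupp.single a 1) = Finsupp.single b 1) :
    K.Unital ↔ ∀ a : K.B, K.dim a = 0 → K.eps a = 1 := by
  constructor
  · intro hU a ha
    have h := (hU a).1
    rw [ha, Function.iterate_zero_apply, epsc_single] at h
    exact h
  · intro h0 a
    obtain ⟨b, hbd0, hit⟩ := bdp_iter_single K hb (K.dim a) a rfl
    have hp : K.epsc (K.bdp^[K.dim a] (Finsupp.single a 1)) = 1 := by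
      rw [hit, epsc_single]
      exact h0 b hbd0
    exact ⟨(epsc_bdm_iter_eq_bdp_iter K _ _).trans hp, hp⟩
end

section
/- Let K be a free augmented directed complex such that ∂⁺a is a single basis element whenever a is a positive-dimensional basis element. Then K is loop-free if and only if its basis elements admit a partial order such that, for every basis element a, every basis element occurring in ∂⁻a strictly precedes every basis element occurring in ∂⁺a. -/
open Finsupp

namespace FADC
variable (K : FADC)

noncomputable def bdcHom : (K.B →₀ ℤ) →ₗ[ℤ] (K.B →₀ ℤ) :=
  Finsupp.lsum ℤ fun b => LinearMap.toSpanSingleton ℤ (K.B →₀ ℤ) (K.bd b)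

lemma bdc_eq (c : K.B →₀ ℤ) : K.bdc c = K.bdcHom c := rfl

lemma bdc_single (b : K.B) : K.bdc (Finsupp.single b 1) = K.bd b := by
  simp [bdc, Finsupp.sum_single_index]

lemma bdc_bdc (c : K.B →₀ ℤ) : K.bdc (K.bdc c) = 0 := by
  rw [bdc_eq, bdc_eq]
  have h : K.bdcHom.comp K.bdcHom = 0 := by
    apply Finsupp.lhom_ext
    intro b n
    have h1 : K.bdcHom (Finsupp.single b n) = n • K.bd b := by
      simp [bdcHom, LinearMap.toSpanSingleton_apply]
    have h2 : K.bdcHom (K.bd b) = 0 := by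
      rw [← bdc_eq]; exact K.bd_bd b
    simp [LinearMap.comp_apply, h1, map_smul, h2]
  calc K.bdcHom (K.bdcHom c) = (K.bdcHom.comp K.bdcHom) c := rfl
    _ = 0 := by rw [h]; rfl

lemma bdp_sub_bdm (c : K.B →₀ ℤ) : K.bdp c - K.bdm c = K.bdc c := by
  ext b
  simp only [Finsupp.sub_apply, bdp, bdm, Finsupp.mapRange_apply, Finsupp.neg_apply]
  omega

lemma bdc_bdp_eq_bdc_bdm (c : K.B →₀ ℤ) : K.bdc (K.bdp c) = K.bdc (K.bdm c) := by
  have h : K.bdcHom (K.bdp c - K.bdm c) = 0 := by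
    rw [← bdc_eq, K.bdp_sub_bdm c]; exact K.bdc_bdc c
  rw [map_sub, sub_eq_zero] at h
  rw [bdc_eq, bdc_eq]
  exact h

lemma bdp_congr {x y : K.B →₀ ℤ} (h : K.bdc x = K.bdc y) : K.bdp x = K.bdp y := by
  unfold bdp; rw [h]

lemma bdm_congr {x y : K.B →₀ ℤ} (h : K.bdc x = K.bdc y) : K.bdm x = K.bdm y := by
  unfold bdm; rw [h]

lemma bdc_zero : K.bdc 0 = 0 := by rw [bdc_eq]; exact map_zero _

lemma bdp_zero : K.bdp 0 = 0 := by
  unfold bdp; rw [K.bdc_zero]; ext b; simp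

lemma bdm_zero : K.bdm 0 = 0 := by
  unfold bdm; rw [K.bdc_zero]; ext b; simp

/-- Key: `∂⁻ ∂⁻ c = ∂⁻ ∂⁺ c` and `∂⁺ ∂⁻ c = ∂⁺ ∂⁺ c`. -/
lemma bdm_bdm (c : K.B →₀ ℤ) : K.bdm (K.bdm c) = K.bdm (K.bdp c) :=
  K.bdm_congr (K.bdc_bdp_eq_bdc_bdm c).symm

lemma bdp_bdm (c : K.B →₀ ℤ) : K.bdp (K.bdm c) = K.bdp (K.bdp c) :=
  K.bdp_congr (K.bdc_bdp_eq_bdc_bdm c).symm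

lemma iter_eq (r : ℕ) (x : K.B →₀ ℤ) :
    K.bdm^[r + 1] x = K.bdm (K.bdp^[r] x) ∧ K.bdp^[r + 1] x = K.bdp (K.bdp^[r] x) := by
  induction r with
  | zero => simp
  | succ r ih =>
    constructor
    · rw [Function.iterate_succ_apply' K.bdm, ih.1, K.bdm_bdm,
        ← Function.iterate_succ_apply' K.bdp]
    · rw [Function.iterate_succ_apply' K.bdp, ih.2,
        ← Function.iterate_succ_apply' K.bdp]

lemma bd_of_dim_zero (b : K.B) (h : K.dim b = 0) : K.bd b = 0 := by
  rw [← Finsupp.support_eq_empty]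
  by_contra hne
  obtain ⟨b', hb'⟩ := Finset.nonempty_iff_ne_empty.mpr hne
  have := K.bd_dim b b' hb'
  omega

lemma bdp_single_dim_zero (b : K.B) (h : K.dim b = 0) : K.bdp (Finsupp.single b 1) = 0 := by
  unfold bdp
  rw [K.bdc_single, K.bd_of_dim_zero b h]
  ext b'; simp

lemma bdp_iter_single (hb : ∀ a : K.B, 0 < K.dim a →
      ∃ b : K.B, K.bdp (Finsupp.single a 1) = Finsupp.single b 1)
    (r : ℕ) (a : K.B) :
    K.bdp^[r] (Finsupp.single a 1) = 0 ∨
      ∃ b, K.bdp^[r] (Finsupp.single a 1) = Finsupp.single b 1 := by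
  induction r with
  | zero => exact Or.inr ⟨a, rfl⟩
  | succ r ih =>
    rw [Function.iterate_succ_apply' K.bdp]
    rcases ih with h | ⟨b, h⟩
    · rw [h, K.bdp_zero]; exact Or.inl rfl
    · rw [h]
      rcases Nat.eq_zero_or_pos (K.dim b) with h0 | h0
      · rw [K.bdp_single_dim_zero b h0]; exact Or.inl rfl
      · exact Or.inr (hb b h0)


end FADC

/-- Proposition 2.8(2): if `∂⁺a` is a single basis element for every
positive-dimensional basis element `a`, then `K` is loop-free iff its basis elements
admit a (strict) partial order in which the terms of `∂⁻a` strictly precede the terms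
of `∂⁺a` for every basis element `a`. -/
theorem stmt1 (K : FADC)
    (hb : ∀ a : K.B, 0 < K.dim a →
      ∃ b : K.B, K.bdp (Finsupp.single a 1) = Finsupp.single b 1) :
    K.LoopFree ↔
      ∃ lt : K.B → K.B → Prop, IsStrictOrder K.B lt ∧
        ∀ a : K.B, ∀ b ∈ (K.bdm (Finsupp.single a 1)).support,
          ∀ b' ∈ (K.bdp (Finsupp.single a 1)).support, lt b b' := by
  constructor
  · rintro ⟨lt, hord, h⟩
    refine ⟨lt, hord, fun a b hbm b' hbp => ?_⟩
    have h1 := h a 1 one_pos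
    rw [Function.iterate_one, Function.iterate_one] at h1
    exact h1 b hbm b' hbp
  · rintro ⟨lt, hord, h⟩
    refine ⟨lt, hord, fun a r hr b hbm b' hbp => ?_⟩
    obtain ⟨s, rfl⟩ : ∃ s, r = s + 1 := ⟨r - 1, by omega⟩
    rw [(K.iter_eq s _).1] at hbm
    rw [(K.iter_eq s _).2] at hbp
    rcases K.bdp_iter_single hb s a with h0 | ⟨c, hc⟩
    · rw [h0, K.bdm_zero] at hbm
      simp at hbm
    · rw [hc] at hbm hbp
      exact h c b hbm b' hbp
end

section
/- Let K be a loop-free unital free augmented directed complex and let x = (x_0^−, x_0^+ | x_1^−, x_1^+ | …) be a member of νK. Then x_0^− and x_0^+ are basis elements. -/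
open Finsupp

/-! Unitality in dimension `0` says `ε a = 1` for every `0`-dimensional basis element `a`, so
`ε x_0^α` is the sum of the coefficients of `x_0^α`. These are nonnegative integers, and a
nonnegative integer chain with coefficient sum `1` is a single basis element. -/

theorem Finsupp.exists_eq_single_one_of_nonneg_of_sum_eq_one {α : Type*} (c : α →₀ ℤ)
    (hc : ∀ a, 0 ≤ c a) (hsum : c.sum (fun _ n => n) = 1) : ∃ a, c = single a 1 := by
  classical
  obtain ⟨a, ha⟩ : c.support.Nonempty := by
    rw [Finset.nonempty_iff_ne_empty]
    rintro h
    simp [Finsupp.sum, h] at hsum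
  have hsplit : c a + ∑ b ∈ c.support.erase a, c b = 1 := by
    rw [Finset.add_sum_erase _ _ ha]; exact hsum
  have hrest_nonneg : 0 ≤ ∑ b ∈ c.support.erase a, c b := Finset.sum_nonneg fun b _ => hc b
  have hca_pos : 0 < c a := (hc a).lt_of_ne' (mem_support_iff.mp ha)
  have hrest : ∀ b ∈ c.support.erase a, c b = 0 :=
    (Finset.sum_eq_zero_iff_of_nonneg fun b _ => hc b).mp (by omega)
  refine ⟨a, ext fun b => ?_⟩
  rcases eq_or_ne b a with rfl | hba
  · simp only [single_eq_same]; omega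
  · rw [single_eq_of_ne' hba.symm]
    by_contra hb
    exact hb (hrest b (Finset.mem_erase.mpr ⟨hba, mem_support_iff.mpr hb⟩))

namespace FADC

variable {K : FADC}

theorem Unital.eps_eq_one (hU : K.Unital) {b : K.B} (hb : K.dim b = 0) : K.eps b = 1 := by
  simpa [hb, epsc] using (hU b).1

theorem Unital.epsc_eq_sum (hU : K.Unital) {c : K.B →₀ ℤ} (hc : ∀ b ∈ c.support, K.dim b = 0) :
    K.epsc c = c.sum (fun _ n => n) :=
  Finset.sum_congr rfl fun b hb => by simp only [hU.eps_eq_one (hc b hb), mul_one]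

theorem Unital.exists_eq_single_of_epsc_eq_one (hU : K.Unital) {c : K.B →₀ ℤ}
    (hnonneg : ∀ b, 0 ≤ c b) (hdim : ∀ b ∈ c.support, K.dim b = 0) (heps : K.epsc c = 1) :
    ∃ b, c = single b 1 :=
  c.exists_eq_single_one_of_nonneg_of_sum_eq_one hnonneg (hU.epsc_eq_sum hdim ▸ heps)

end FADC

theorem stmt6_general (K : FADC) (hU : K.Unital)
    (xm xp : ℕ → (K.B →₀ ℤ)) (hx : NuMem K xm xp) :
    (∃ b : K.B, xm 0 = Finsupp.single b 1) ∧
    (∃ b : K.B, xp 0 = Finsupp.single b 1) :=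
  ⟨hU.exists_eq_single_of_epsc_eq_one (hx.nonneg_m 0) (hx.dim_m 0) hx.eps_m,
    hU.exists_eq_single_of_epsc_eq_one (hx.nonneg_p 0) (hx.dim_p 0) hx.eps_p⟩

/-- Theorem 4.1(1): if `K` is loop-free and unital and `x ∈ νK`, then `x_0^-` and
`x_0^+` are basis elements. -/
theorem stmt6 (K : FADC) (hLF : K.LoopFree) (hU : K.Unital)
    (xm xp : ℕ → (K.B →₀ ℤ)) (hx : NuMem K xm xp) :
    (∃ b : K.B, xm 0 = Finsupp.single b 1) ∧
    (∃ b : K.B, xp 0 = Finsupp.single b 1) :=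
  stmt6_general K hU xm xp hx
end

section
/- Let K be a free augmented directed complex, let q ≥ 0, let w be a q-dimensional chain, and let a_1, …, a_k be pairwise distinct (q+1)-dimensional basis elements such that whenever ∂⁺a_i and ∂⁻a_j have a common basis element in their supports, then i < j. For 0 ≤ r ≤ k set y_r = w + ∂a_1 + … + ∂a_r, and for a q-dimensional basis element b let λ_r^b denote the coordinate of b in y_r. Then for every q-dimensional basis element b there exists m with 0 ≤ m ≤ k such that λ_0^b ≤ λ_1^b ≤ … ≤ λ_m^b and λ_m^b ≥ λ_{m+1}^b ≥ … ≥ λ_k^b. Consequently, if y_0 and y_k have nonnegative coordinates, then every y_r (0 ≤ r ≤ k) has nonnegative coordinates. -/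
open Finsupp

/-- Unimodality of coefficients: if the distinct `(q+1)`-dimensional basis elements
`a_1, …, a_k` are ordered so that `∂⁺a_i` and `∂⁻a_j` can share a term only when
`i < j`, and `y_r = w + ∂a_1 + … + ∂a_r`, then for each basis element `b` the
coefficients of `b` in `y_0, …, y_k` first increase and then decrease; consequently,
if `y_0` and `y_k` have nonnegative coordinates, so does every `y_r`. -/
theorem stmt8 (K : FADC) (q k : ℕ) (w : K.B →₀ ℤ)
    (hw : ∀ b ∈ w.support, K.dim b = q)
    (a : ℕ → K.B) (hdim : ∀ i, i < k → K.dim (a i) = q + 1)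
    (hinj : ∀ i, i < k → ∀ j, j < k → a i = a j → i = j)
    (horder : ∀ i, i < k → ∀ j, j < k →
      (∃ b : K.B, b ∈ (K.bdp (Finsupp.single (a i) 1)).support ∧
        b ∈ (K.bdm (Finsupp.single (a j) 1)).support) → i < j)
    (y : ℕ → K.B →₀ ℤ)
    (hy : ∀ r, y r = w + ∑ i ∈ Finset.range r, K.bdc (Finsupp.single (a i) 1)) :
    (∀ b : K.B, ∃ m, m ≤ k ∧
      (∀ r s, r ≤ s → s ≤ m → y r b ≤ y s b) ∧
      (∀ r s, m ≤ r → r ≤ s → s ≤ k → y s b ≤ y r b)) ∧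
    ((∀ b, 0 ≤ y 0 b) → (∀ b, 0 ≤ y k b) → ∀ r, r ≤ k → ∀ b, 0 ≤ y r b) := by
  classical
  -- membership in the support of ∂⁺ / ∂⁻ in terms of the sign of the coefficient
  have hp : ∀ (c : K.B →₀ ℤ) (b : K.B),
      b ∈ (K.bdp c).support ↔ 0 < K.bdc c b := by
    intro c b
    simp only [FADC.bdp, Finsupp.mem_support_iff, Finsupp.mapRange_apply]
    omega
  have hm : ∀ (c : K.B →₀ ℤ) (b : K.B),
      b ∈ (K.bdm c).support ↔ K.bdc c b < 0 := by
    intro c b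
    simp only [FADC.bdm, Finsupp.mem_support_iff, Finsupp.mapRange_apply,
      Finsupp.neg_apply]
    omega
  have key : ∀ b : K.B, ∃ m, m ≤ k ∧
      (∀ i, i < m → 0 ≤ K.bdc (Finsupp.single (a i) 1) b) ∧
      (∀ i, m ≤ i → i < k → K.bdc (Finsupp.single (a i) 1) b ≤ 0) := by
    intro b
    by_cases h : ∃ j, j < k ∧ K.bdc (Finsupp.single (a j) 1) b < 0
    · refine ⟨Nat.find h, (Nat.find_spec h).1.le, ?_, ?_⟩
      · intro i hi
        have := Nat.find_min h hi
        push_neg at this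
        by_contra hneg
        exact absurd (this (lt_trans hi (Nat.find_spec h).1)) (by omega)
      · intro i hmi hik
        by_contra hpos
        push_neg at hpos
        have hbp : b ∈ (K.bdp (Finsupp.single (a i) 1)).support := (hp _ _).2 hpos
        have hbm : b ∈ (K.bdm (Finsupp.single (a (Nat.find h)) 1)).support :=
          (hm _ _).2 (Nat.find_spec h).2
        have := horder i hik (Nat.find h) (Nat.find_spec h).1 ⟨b, hbp, hbm⟩
        omega
    · push_neg at h
      exact ⟨k, le_rfl, fun i hi => h i hi, fun i h1 h2 => absurd h1 (by omega)⟩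
  have hyb : ∀ r (b : K.B),
      y r b = w b + ∑ i ∈ Finset.range r, K.bdc (Finsupp.single (a i) 1) b := by
    intro r b
    rw [hy r]
    simp [Finsupp.add_apply, Finsupp.finset_sum_apply]
  have main : ∀ b : K.B, ∃ m, m ≤ k ∧
      (∀ r s, r ≤ s → s ≤ m → y r b ≤ y s b) ∧
      (∀ r s, m ≤ r → r ≤ s → s ≤ k → y s b ≤ y r b) := by
    intro b
    obtain ⟨m, hmk, hpos, hneg⟩ := key b
    refine ⟨m, hmk, ?_, ?_⟩
    · intro r s hrs hsm
      rw [hyb r b, hyb s b]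
      have hsum := Finset.sum_range_add_sum_Ico
        (fun i => K.bdc (Finsupp.single (a i) 1) b) hrs
      have : (0 : ℤ) ≤ ∑ i ∈ Finset.Ico r s, K.bdc (Finsupp.single (a i) 1) b := by
        refine Finset.sum_nonneg fun i hi => ?_
        rw [Finset.mem_Ico] at hi
        exact hpos i (by omega)
      omega
    · intro r s hmr hrs hsk
      rw [hyb r b, hyb s b]
      have hsum := Finset.sum_range_add_sum_Ico
        (fun i => K.bdc (Finsupp.single (a i) 1) b) hrs
      have : ∑ i ∈ Finset.Ico r s, K.bdc (Finsupp.single (a i) 1) b ≤ 0 := by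
        refine Finset.sum_nonpos fun i hi => ?_
        rw [Finset.mem_Ico] at hi
        exact hneg i (by omega) (by omega)
      omega
  refine ⟨main, fun h0 hk r hr b => ?_⟩
  obtain ⟨m, hmk, hinc, hdec⟩ := main b
  by_cases hrm : r ≤ m
  · exact le_trans (h0 b) (hinc 0 r (Nat.zero_le _) hrm)
  · exact le_trans (hk b) (hdec r k (by omega) hr le_rfl)
end

section
/- Let K be a loop-free unital free augmented directed complex, let x ∈ νK, let q ≥ 0 and let α be a sign. Then there is no sequence of basis elements e_0, a_1, e_1, a_2, e_2, …, a_k, e_k with k ≥ 1 such that e_0 = e_k, each a_r (1 ≤ r ≤ k) lies in the support of x_{q+1}^α, each e_{r−1} lies in the support of ∂⁻a_r, and each e_r lies in the support of ∂⁺a_r. (In other words, the network G_q^α(x), whose edges are the terms of g_q^α(x), whose vertices are the terms of x_{q+1}^α, and in which an edge e has target a iff e is a term of ∂⁻a and source a iff e is a term of ∂⁺a, is acyclic.) -/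
open Finsupp

theorem rel_of_forall_rel_succ_of_lt_bound {β : Type*} (r : β → β → Prop) [IsTrans β r]
    {f : ℕ → β} {k : ℕ} (h : ∀ n < k, r (f n) (f (n + 1))) (hk : 0 < k) : r (f 0) (f k) := by
  induction k with
  | zero => omega
  | succ k ih =>
    rcases Nat.eq_zero_or_pos k with rfl | hk'
    · exact h 0 zero_lt_one
    · exact _root_.trans (ih (fun n hn => h n (by omega)) hk') (h k k.lt_succ_self)

theorem ne_of_forall_rel_succ_of_lt_bound {β : Type*} (r : β → β → Prop) [IsStrictOrder β r]
    {f : ℕ → β} {k : ℕ} (h : ∀ n < k, r (f n) (f (n + 1))) (hk : 0 < k) : f 0 ≠ f k :=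
  fun hcycle => irrefl (r := r) (f 0) (hcycle ▸ rel_of_forall_rel_succ_of_lt_bound r h hk)

namespace FADC

theorem LoopFree.exists_bdm_lt_bdp {K : FADC} (hLF : K.LoopFree) :
    ∃ lt : K.B → K.B → Prop, IsStrictOrder K.B lt ∧
      ∀ a : K.B, ∀ b ∈ (K.bdm (single a 1)).support,
        ∀ b' ∈ (K.bdp (single a 1)).support, lt b b' := by
  obtain ⟨lt, hlt, hbd⟩ := hLF
  exact ⟨lt, hlt, fun a => hbd a 1 one_pos⟩

end FADC

theorem stmt10_general (K : FADC) (hLF : K.LoopFree) (q : ℕ)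
    (xa : ℕ → K.B →₀ ℤ) :
    ¬ ∃ (k : ℕ) (e : ℕ → K.B) (a : ℕ → K.B), 1 ≤ k ∧ e 0 = e k ∧
      ∀ r, 1 ≤ r → r ≤ k →
        a r ∈ (xa (q + 1)).support ∧
        e (r - 1) ∈ (K.bdm (Finsupp.single (a r) 1)).support ∧
        e r ∈ (K.bdp (Finsupp.single (a r) 1)).support := by
  rintro ⟨k, e, a, hk, hcycle, hterms⟩
  obtain ⟨lt, hlt, hbd⟩ := hLF.exists_bdm_lt_bdp
  refine ne_of_forall_rel_succ_of_lt_bound lt (fun n hn => ?_) hk hcycle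
  obtain ⟨-, hm, hp⟩ := hterms (n + 1) (by omega) hn
  exact hbd (a (n + 1)) _ hm _ hp

/-- The network `G_q^α(x)` is acyclic: there is no cyclic sequence
`e_0, a_1, e_1, …, a_k, e_k` with `k ≥ 1`, `e_0 = e_k`, each `a_r` a term of
`x_{q+1}^α`, each `e_{r-1}` a term of `∂⁻a_r` and each `e_r` a term of `∂⁺a_r`. -/
theorem stmt10 (K : FADC) (hLF : K.LoopFree) (hU : K.Unital)
    (xm xp : ℕ → (K.B →₀ ℤ)) (hx : NuMem K xm xp) (q : ℕ)
    (xa : ℕ → K.B →₀ ℤ) (hxa : xa = xm ∨ xa = xp) :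
    ¬ ∃ (k : ℕ) (e : ℕ → K.B) (a : ℕ → K.B), 1 ≤ k ∧ e 0 = e k ∧
      ∀ r, 1 ≤ r → r ≤ k →
        a r ∈ (xa (q + 1)).support ∧
        e (r - 1) ∈ (K.bdm (Finsupp.single (a r) 1)).support ∧
        e r ∈ (K.bdp (Finsupp.single (a r) 1)).support :=
  stmt10_general K hLF q xa
end
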